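/- In the rewrite game over {a,b} with rules a → ε, a^2 → ε, b → ε, the Grundy function is bounded above by 3: every word has Grundy value in {0,1,2,3}. -/
import Mathlib

inductive AB | a | b
deriving DecidableEq

/-- One move of the game `{a → ε, a² → ε, b → ε}`. -/
def Step (w w' : List AB) : Prop :=
  ∃ x y : List AB, w' = x ++ y ∧
    (w = x ++ [AB.a] ++ y ∨ w = x ++ [AB.a, AB.a] ++ y ∨ w = x ++ [AB.b] ++ y)

/-- The minimum excluded value of a set of naturals. -/
noncomputable def mex (S : Set ℕ) : ℕ := sInf {n | n ∉ S}

/-- `g` is the Grundy function of the game with moves `step`. -/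
def IsGrundy (step : List AB → List AB → Prop) (g : List AB → ℕ) : Prop :=
  ∀ w, g w = mex (g '' {w' | step w w'})

namespace Stmt16

/-- contribution of an a-run of length `n` -/
def c (n : ℕ) : ZMod 4 := if n % 3 = 0 then 0 else if n % 3 = 1 then 2 else 1

/-- lengths of maximal a-runs (including empty runs between/around b's); always nonempty -/
def runs : List AB → List ℕ
  | [] => [0]
  | AB.a :: t =>
    match runs t with
    | [] => [1]
    | h :: s => (h + 1) :: s
  | AB.b :: t => 0 :: runs t

def csum (l : List ℕ) : ZMod 4 := (l.map c).sum

def T (l : List ℕ) : ZMod 4 := csum l + 2 * l.length + 2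

def S (w : List AB) : ZMod 4 := T (runs w)

def sig : ZMod 4 → ℕ := fun z => if z = 0 then 0 else if z = 1 then 2 else if z = 2 then 1 else 3

def t (w : List AB) : ℕ := sig (S w)

lemma runs_exists_cons (w : List AB) : ∃ h s, runs w = h :: s := by
  induction w with
  | nil => exact ⟨0, [], rfl⟩
  | cons hd tl ih =>
    obtain ⟨h, s, hs⟩ := ih
    cases hd
    · exact ⟨h + 1, s, by simp [runs, hs]⟩
    · exact ⟨0, runs tl, rfl⟩

lemma runs_ne_nil (w : List AB) : runs w ≠ [] := by
  obtain ⟨h, s, hs⟩ := runs_exists_cons w; simp [hs]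

lemma runs_a {w : List AB} {h : ℕ} {s : List ℕ} (e : runs w = h :: s) :
    runs (AB.a :: w) = (h + 1) :: s := by simp [runs, e]

lemma runs_b (w : List AB) : runs (AB.b :: w) = 0 :: runs w := rfl

/-- runs of a concatenation, in the concrete shape we need -/
lemma runs_append : ∀ (x : List AB) {y : List AB} {r : List ℕ} {p q : ℕ} {s : List ℕ},
    runs x = r ++ [p] → runs y = q :: s → runs (x ++ y) = r ++ (p + q) :: s := by
  intro x
  induction x with
  | nil =>
    intro y r p q s hx hy
    simp only [runs] at hx
    cases r with
    | nil =>
      simp at hx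
      subst hx
      simpa [hy] using hy
    | cons a b =>
      exfalso
      have := congrArg List.length hx
      simp at this
  | cons hd tl ih =>
    intro y r p q s hx hy
    cases hd with
    | a =>
      obtain ⟨h, s', hs'⟩ := runs_exists_cons tl
      rw [runs_a hs'] at hx
      cases r with
      | nil =>
        simp at hx
        obtain ⟨hp, rfl⟩ := hx
        have h1 : runs tl = ([] : List ℕ) ++ [h] := by simpa using hs'
        have h2 := ih h1 hy
        simp only [List.nil_append] at h2
        rw [List.cons_append, runs_a h2]
        simp; omega
      | cons r0 r' =>
        simp at hx
        obtain ⟨h1, h2⟩ := hx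
        have h3 : runs tl = (h :: r') ++ [p] := by rw [hs', h2]; rfl
        have h4 := ih h3 hy
        rw [List.cons_append] at h4 ⊢
        rw [runs_a h4, ← h1]
        simp
    | b =>
      rw [runs_b] at hx
      cases r with
      | nil =>
        exfalso
        simp at hx
        exact runs_ne_nil tl hx.2
      | cons r0 r' =>
        simp at hx
        obtain ⟨h1, h2⟩ := hx
        have h4 := ih h2 hy
        rw [List.cons_append, runs_b, h4, ← h1]
        simp

/-- inverse of runs -/
def unword : List ℕ → List AB
  | [] => []
  | [h] => List.replicate h AB.a
  | h :: t => List.replicate h AB.a ++ AB.b :: unword t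

lemma unword_cons {t : List ℕ} (h : ℕ) (ht : t ≠ []) :
    unword (h :: t) = List.replicate h AB.a ++ AB.b :: unword t := by
  cases t with
  | nil => exact absurd rfl ht
  | cons a b => rfl

lemma runs_replicate (n : ℕ) : runs (List.replicate n AB.a) = [n] := by
  induction n with
  | zero => rfl
  | succ n ih => rw [List.replicate_succ, runs_a ih]

lemma runs_repl_b (n : ℕ) (z : List AB) :
    runs (List.replicate n AB.a ++ AB.b :: z) = n :: runs z := by
  induction n with
  | zero => simp [runs_b]
  | succ n ih => rw [List.replicate_succ, List.cons_append, runs_a ih]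

lemma runs_unword : ∀ l : List ℕ, l ≠ [] → runs (unword l) = l := by
  intro l
  induction l with
  | nil => intro h; exact absurd rfl h
  | cons hd tl ih =>
    intro _
    cases tl with
    | nil => simpa [unword] using runs_replicate hd
    | cons a b =>
      rw [unword_cons hd (by simp), runs_repl_b]
      rw [ih (by simp)]

lemma unword_runs : ∀ w : List AB, unword (runs w) = w := by
  intro w
  induction w with
  | nil => rfl
  | cons hd tl ih =>
    obtain ⟨h, s, hs⟩ := runs_exists_cons tl
    cases hd with
    | a =>
      rw [runs_a hs]
      cases s with
      | nil =>
        rw [hs] at ih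
        simpa [unword, List.replicate_succ] using congrArg (AB.a :: ·) ih
      | cons a b =>
        rw [unword_cons _ (by simp), List.replicate_succ]
        rw [hs] at ih
        rw [unword_cons _ (by simp)] at ih
        simpa using congrArg (AB.a :: ·) ih
    | b =>
      rw [runs_b, unword_cons _ (runs_ne_nil tl), ih]
      simp

def pre (r : List ℕ) : List AB := if r = [] then [] else unword r ++ [AB.b]
def post (s : List ℕ) : List AB := if s = [] then [] else AB.b :: unword s

lemma unword_mid : ∀ (r : List ℕ) (m : ℕ) (s : List ℕ),
    unword (r ++ m :: s) = pre r ++ List.replicate m AB.a ++ post s := by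
  intro r
  induction r with
  | nil =>
    intro m s
    cases s with
    | nil => simp [unword, pre, post]
    | cons a b => rw [List.nil_append, unword_cons _ (by simp)]; simp [pre, post]
  | cons hd tl ih =>
    intro m s
    rw [List.cons_append, unword_cons _ (by simp)]
    rw [ih]
    cases tl with
    | nil => simp [pre, unword]
    | cons a b =>
      simp only [pre, if_neg (by simp : (hd :: a :: b : List ℕ) ≠ []),
        if_neg (by simp : (a :: b : List ℕ) ≠ [])]
      rw [unword_cons hd (by simp)]
      simp

lemma runs_mid (r : List ℕ) (m : ℕ) (s : List ℕ) :
    runs (pre r ++ List.replicate m AB.a ++ post s) = r ++ m :: s := by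
  rw [← unword_mid, runs_unword _ (by simp)]

/-! ### arithmetic of T -/

def E (r s : List ℕ) : ZMod 4 := csum r + csum s + 2 * r.length + 2 * s.length + 4

lemma T_mid (r : List ℕ) (n : ℕ) (s : List ℕ) : T (r ++ n :: s) = c n + E r s := by
  simp only [T, E, csum, List.map_append, List.sum_append, List.map_cons, List.sum_cons,
    List.length_append, List.length_cons]
  push_cast
  ring

lemma E_cons (r : List ℕ) (q : ℕ) (s : List ℕ) : E r (q :: s) = c q + 2 + E r s := by
  simp only [E, csum, List.map_cons, List.sum_cons, List.length_cons]
  push_cast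
  ring

lemma T_mid2 (r : List ℕ) (p q : ℕ) (s : List ℕ) :
    T (r ++ p :: q :: s) = c p + c q + 2 + E r s := by
  rw [show r ++ p :: q :: s = r ++ p :: (q :: s) from rfl, T_mid, E_cons]
  ring

/-! ### move constructions -/

lemma w_eq_mid {w : List AB} {r : List ℕ} {m : ℕ} {s : List ℕ} (hw : runs w = r ++ m :: s) :
    w = pre r ++ List.replicate m AB.a ++ post s := by
  conv_lhs => rw [← unword_runs w, hw, unword_mid]

lemma del_a {w : List AB} {r : List ℕ} {m : ℕ} {s : List ℕ}
    (hw : runs w = r ++ m :: s) (hm : 1 ≤ m) :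
    ∃ w', Step w w' ∧ S w' = c (m - 1) + E r s := by
  refine ⟨pre r ++ List.replicate (m - 1) AB.a ++ post s, ⟨pre r ++ List.replicate (m - 1) AB.a,
    post s, by simp, Or.inl ?_⟩, ?_⟩
  · rw [w_eq_mid hw]
    have : List.replicate m AB.a = List.replicate (m - 1) AB.a ++ [AB.a] := by
      rw [← List.replicate_succ']
      congr 1
      omega
    rw [this]
    simp
  · rw [S, runs_mid, T_mid]

lemma del_aa {w : List AB} {r : List ℕ} {m : ℕ} {s : List ℕ}
    (hw : runs w = r ++ m :: s) (hm : 2 ≤ m) :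
    ∃ w', Step w w' ∧ S w' = c (m - 2) + E r s := by
  refine ⟨pre r ++ List.replicate (m - 2) AB.a ++ post s, ⟨pre r ++ List.replicate (m - 2) AB.a,
    post s, by simp, Or.inr (Or.inl ?_)⟩, ?_⟩
  · rw [w_eq_mid hw]
    have : List.replicate m AB.a = List.replicate (m - 2) AB.a ++ [AB.a, AB.a] := by
      rw [show [AB.a, AB.a] = List.replicate 2 AB.a from rfl, ← List.replicate_add]
      congr 1
      omega
    rw [this]
    simp
  · rw [S, runs_mid, T_mid]

lemma del_b {w : List AB} {r : List ℕ} {p q : ℕ} {s : List ℕ}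
    (hw : runs w = r ++ p :: q :: s) :
    ∃ w', Step w w' ∧ S w' = c (p + q) + E r s := by
  refine ⟨pre r ++ List.replicate (p + q) AB.a ++ post s, ⟨pre r ++ List.replicate p AB.a,
    List.replicate q AB.a ++ post s, ?_, Or.inr (Or.inr ?_)⟩, ?_⟩
  · simp only [List.replicate_add, List.append_assoc]
  · rw [w_eq_mid hw]
    have : post (q :: s) = AB.b :: (List.replicate q AB.a ++ post s) := by
      have h1 : unword (q :: s) = pre ([] : List ℕ) ++ List.replicate q AB.a ++ post s := by
        simpa using unword_mid [] q s
      simp only [post, if_neg (by simp : (q :: s : List ℕ) ≠ [])]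
      rw [h1]
      simp [pre, post]
    rw [this]
    simp
  · rw [S, runs_mid, T_mid]

/-! ### arithmetic facts about c -/

lemma c_ne_succ (n : ℕ) : c (n + 1) ≠ c n := by
  have h3 : n % 3 = 0 ∨ n % 3 = 1 ∨ n % 3 = 2 := by omega
  rcases h3 with h3 | h3 | h3 <;>
    · have h4 : (n + 1) % 3 = (n % 3 + 1) % 3 := by omega
      rw [c, c, h4, h3]
      decide

lemma c_ne_succ2 (n : ℕ) : c (n + 2) ≠ c n := by
  have h3 : n % 3 = 0 ∨ n % 3 = 1 ∨ n % 3 = 2 := by omega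
  rcases h3 with h3 | h3 | h3 <;>
    · have h4 : (n + 2) % 3 = (n % 3 + 2) % 3 := by omega
      rw [c, c, h4, h3]
      decide

lemma c_b_ne (p q : ℕ) : c p + c q + 2 ≠ c (p + q) := by
  have hp : p % 3 = 0 ∨ p % 3 = 1 ∨ p % 3 = 2 := by omega
  have hq : q % 3 = 0 ∨ q % 3 = 1 ∨ q % 3 = 2 := by omega
  rcases hp with hp | hp | hp <;> rcases hq with hq | hq | hq <;>
    · have h4 : (p + q) % 3 = (p % 3 + q % 3) % 3 := by omega
      rw [c, c, c, h4, hp, hq]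
      decide

lemma c_add_nonone {p q : ℕ} (hp : p % 3 ≠ 1) (hq : q % 3 ≠ 1) : c (p + q) = c p + c q := by
  have hp' : p % 3 = 0 ∨ p % 3 = 2 := by omega
  have hq' : q % 3 = 0 ∨ q % 3 = 2 := by omega
  rcases hp' with hp' | hp' <;> rcases hq' with hq' | hq' <;>
    · have h4 : (p + q) % 3 = (p % 3 + q % 3) % 3 := by omega
      rw [c, c, c, h4, hp', hq']
      decide

/-! ### every move changes S -/

lemma step_ne {w w' : List AB} (h : Step w w') : S w' ≠ S w := by
  obtain ⟨x, y, rfl, hcase⟩ := h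
  obtain ⟨rx, px, hx⟩ : ∃ r p, runs x = r ++ [p] := by
    rcases List.eq_nil_or_concat (runs x) with h0 | ⟨L, b, hL⟩
    · exact absurd h0 (runs_ne_nil x)
    · exact ⟨L, b, by simpa using hL⟩
  obtain ⟨qy, sy, hy⟩ := runs_exists_cons y
  have hxy : runs (x ++ y) = rx ++ (px + qy) :: sy := runs_append x hx hy
  rcases hcase with hc | hc | hc <;> subst hc <;> rw [List.append_assoc]
  · have hw : runs (x ++ ([AB.a] ++ y)) = rx ++ (px + (qy + 1)) :: sy :=
      runs_append x hx (runs_a hy)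
    rw [S, S, hxy, hw, T_mid, T_mid]
    intro hEq
    exact c_ne_succ (px + qy) (by have h5 := add_right_cancel hEq; rw [show px + qy + 1 = px + (qy + 1) by omega, ← h5])
  · have hw : runs (x ++ ([AB.a, AB.a] ++ y)) = rx ++ (px + (qy + 2)) :: sy :=
      runs_append x hx (runs_a (runs_a hy))
    rw [S, S, hxy, hw, T_mid, T_mid]
    intro hEq
    exact c_ne_succ2 (px + qy) (by have h5 := add_right_cancel hEq; rw [show px + qy + 2 = px + (qy + 2) by omega, ← h5])
  · have hby : runs ([AB.b] ++ y) = 0 :: qy :: sy := by rw [List.singleton_append, runs_b, hy]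
    have hw : runs (x ++ ([AB.b] ++ y)) = rx ++ (px + 0) :: qy :: sy :=
      runs_append x hx hby
    rw [S, S, hxy, hw]
    rw [show px + 0 = px from rfl, T_mid2, T_mid]
    intro hEq
    exact c_b_ne px qy (by have := add_right_cancel hEq; rw [this])

/-! ### counting lemmas -/

lemma csum_cons (h : ℕ) (t : List ℕ) : csum (h :: t) = c h + csum t := by
  simp [csum]

lemma csum_even : ∀ l : List ℕ, (∀ m ∈ l, m % 3 ≠ 2) → csum l = 0 ∨ csum l = 2 := by
  intro l
  induction l with
  | nil => intro _; left; rfl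
  | cons hd tl ih =>
    intro h
    have hhd : c hd = 0 ∨ c hd = 2 := by
      have := h hd (by simp)
      have h3 : hd % 3 = 0 ∨ hd % 3 = 1 := by omega
      rcases h3 with h3 | h3
      · left; simp [c, h3]
      · right; simp [c, h3]
    have htl := ih (fun m hm => h m (by simp [hm]))
    rcases hhd with h1 | h1 <;> rcases htl with h2 | h2 <;> rw [csum_cons, h1, h2] <;>
      first
        | (left; decide)
        | (right; decide)

lemma exists_two {w : List AB} (h : S w = 1 ∨ S w = 3) :
    ∃ r m s, runs w = r ++ m :: s ∧ m % 3 = 2 := by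
  by_cases hex : ∃ m ∈ runs w, m % 3 = 2
  · obtain ⟨m, hm, h2⟩ := hex
    obtain ⟨r, s, hrs⟩ := List.append_of_mem hm
    exact ⟨r, m, s, hrs, h2⟩
  · exfalso
    push_neg at hex
    have heven := csum_even _ hex
    have h2 : ∀ z : ZMod 4, 2 * z = 0 ∨ 2 * z = 2 := by decide
    have hS : S w = csum (runs w) + 2 * ((runs w).length : ZMod 4) + 2 := rfl
    rcases heven with h1 | h1 <;> rcases h2 ((runs w).length : ZMod 4) with hl | hl <;>
      rw [h1, hl] at hS <;> rcases h with h | h <;> rw [h] at hS <;> exact absurd hS (by decide)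

lemma exists_one_or_pair {w : List AB} (h : S w = 2 ∨ S w = 3) :
    (∃ r m s, runs w = r ++ m :: s ∧ m % 3 = 1) ∨
    (∃ p q s', runs w = p :: q :: s' ∧ p % 3 ≠ 1 ∧ q % 3 ≠ 1) := by
  by_cases hex : ∃ m ∈ runs w, m % 3 = 1
  · left
    obtain ⟨m, hm, h1⟩ := hex
    obtain ⟨r, s, hrs⟩ := List.append_of_mem hm
    exact ⟨r, m, s, hrs, h1⟩
  · push_neg at hex
    obtain ⟨h0, s0, hs0⟩ := runs_exists_cons w
    cases s0 with
    | nil =>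
      exfalso
      have hS : S w = c h0 + 4 := by
        rw [S, hs0]
        simp only [T, csum, List.map_cons, List.map_nil, List.sum_cons, List.sum_nil,
          List.length_cons, List.length_nil]
        push_cast
        ring
      have hm := hex h0 (by rw [hs0]; simp)
      have h3 : h0 % 3 = 0 ∨ h0 % 3 = 2 := by omega
      have hc : c h0 = 0 ∨ c h0 = 1 := by
        rcases h3 with h3 | h3
        · left; simp [c, h3]
        · right; simp [c, h3]
      rcases hc with hc | hc <;> rw [hc] at hS <;> rcases h with h | h <;> rw [h] at hS <;>
        exact absurd hS (by decide)
    | cons q s' =>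
      right
      exact ⟨h0, q, s', hs0, hex h0 (by rw [hs0]; simp), hex q (by rw [hs0]; simp)⟩

/-! ### reachability of all smaller values -/

lemma reach {w : List AB} : ∀ u : ℕ, u < t w → ∃ w', Step w w' ∧ t w' = u := by
  intro u hu
  have h4 : S w = 0 ∨ S w = 1 ∨ S w = 2 ∨ S w = 3 := by
    have : ∀ z : ZMod 4, z = 0 ∨ z = 1 ∨ z = 2 ∨ z = 3 := by decide
    exact this _
  rcases h4 with h | h | h | h
  · rw [t, h, show sig 0 = 0 from by decide] at hu
    omega
  · -- S w = 1, target value 2, u ∈ {0,1}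
    rw [t, h, show sig 1 = 2 from by decide] at hu
    obtain ⟨r, m, s, hw, hm⟩ := exists_two (Or.inl h)
    have hSw : S w = c m + E r s := by rw [S, hw, T_mid]
    have hcm : c m = 1 := by rw [c, hm]; decide
    have hE : E r s = 0 := by
      linear_combination (hSw.symm.trans h) - hcm
    have hu' : u = 0 ∨ u = 1 := by omega
    rcases hu' with rfl | rfl
    · obtain ⟨w', hstep, hS'⟩ := del_aa hw (by omega)
      have hc2 : c (m - 2) = 0 := by rw [c, show (m - 2) % 3 = 0 from by omega]; decide
      have h0 : S w' = 0 := by rw [hS', hc2, hE]; ring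
      exact ⟨w', hstep, by rw [t, h0]; decide⟩
    · obtain ⟨w', hstep, hS'⟩ := del_a hw (by omega)
      have hc2 : c (m - 1) = 2 := by rw [c, show (m - 1) % 3 = 1 from by omega]; decide
      have h0 : S w' = 2 := by rw [hS', hc2, hE]; ring
      exact ⟨w', hstep, by rw [t, h0]; decide⟩
  · -- S w = 2, target value 1, u = 0
    rw [t, h, show sig 2 = 1 from by decide] at hu
    have hu' : u = 0 := by omega
    subst hu'
    rcases exists_one_or_pair (Or.inl h) with ⟨r, m, s, hw, hm⟩ | ⟨p, q, s', hw, hp, hq⟩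
    · have hSw : S w = c m + E r s := by rw [S, hw, T_mid]
      have hcm : c m = 2 := by rw [c, show m % 3 = 1 from hm]; decide
      have hE : E r s = 0 := by
        linear_combination (hSw.symm.trans h) - hcm
      obtain ⟨w', hstep, hS'⟩ := del_a hw (by omega)
      have hc2 : c (m - 1) = 0 := by rw [c, show (m - 1) % 3 = 0 from by omega]; decide
      have h0 : S w' = 0 := by rw [hS', hc2, hE]; ring
      exact ⟨w', hstep, by rw [t, h0]; decide⟩
    · have hw' : runs w = [] ++ p :: q :: s' := by simpa using hw
      have hSw : S w = c p + c q + 2 + E [] s' := by rw [S, hw', T_mid2]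
      obtain ⟨w', hstep, hS'⟩ := del_b hw'
      have h2 : c p + c q + 2 + E [] s' = 2 := by rw [← hSw, h]
      have h0 : S w' = 0 := by
        rw [hS', c_add_nonone hp hq]
        linear_combination h2
      exact ⟨w', hstep, by rw [t, h0]; decide⟩
  · -- S w = 3, target value 3, u ∈ {0,1,2}
    rw [t, h, show sig 3 = 3 from by decide] at hu
    have hu' : u = 0 ∨ u = 1 ∨ u = 2 := by omega
    rcases hu' with rfl | rfl | rfl
    · obtain ⟨r, m, s, hw, hm⟩ := exists_two (Or.inr h)
      have hSw : S w = c m + E r s := by rw [S, hw, T_mid]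
      have hcm : c m = 1 := by rw [c, hm]; decide
      have hE : E r s = 2 := by
        linear_combination (hSw.symm.trans h) - hcm
      obtain ⟨w', hstep, hS'⟩ := del_a hw (by omega)
      have hc2 : c (m - 1) = 2 := by rw [c, show (m - 1) % 3 = 1 from by omega]; decide
      have h0 : S w' = 0 := by rw [hS', hc2, hE]; decide
      exact ⟨w', hstep, by rw [t, h0]; decide⟩
    · obtain ⟨r, m, s, hw, hm⟩ := exists_two (Or.inr h)
      have hSw : S w = c m + E r s := by rw [S, hw, T_mid]
      have hcm : c m = 1 := by rw [c, hm]; decide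
      have hE : E r s = 2 := by
        linear_combination (hSw.symm.trans h) - hcm
      obtain ⟨w', hstep, hS'⟩ := del_aa hw (by omega)
      have hc2 : c (m - 2) = 0 := by rw [c, show (m - 2) % 3 = 0 from by omega]; decide
      have h0 : S w' = 2 := by rw [hS', hc2, hE]; ring
      exact ⟨w', hstep, by rw [t, h0]; decide⟩
    · rcases exists_one_or_pair (Or.inr h) with ⟨r, m, s, hw, hm⟩ | ⟨p, q, s', hw, hp, hq⟩
      · have hSw : S w = c m + E r s := by rw [S, hw, T_mid]
        have hcm : c m = 2 := by rw [c, show m % 3 = 1 from hm]; decide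
        have hE : E r s = 1 := by
          linear_combination (hSw.symm.trans h) - hcm
        obtain ⟨w', hstep, hS'⟩ := del_a hw (by omega)
        have hc2 : c (m - 1) = 0 := by rw [c, show (m - 1) % 3 = 0 from by omega]; decide
        have h0 : S w' = 1 := by rw [hS', hc2, hE]; ring
        exact ⟨w', hstep, by rw [t, h0]; decide⟩
      · have hw' : runs w = [] ++ p :: q :: s' := by simpa using hw
        have hSw : S w = c p + c q + 2 + E [] s' := by rw [S, hw', T_mid2]
        obtain ⟨w', hstep, hS'⟩ := del_b hw'
        have h2 : c p + c q + 2 + E [] s' = 3 := by rw [← hSw, h]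
        have h0 : S w' = 1 := by
          rw [hS', c_add_nonone hp hq]
          linear_combination h2
        exact ⟨w', hstep, by rw [t, h0]; decide⟩

/-! ### final assembly -/

lemma mex_spec {A : Set ℕ} {m : ℕ} (h1 : m ∉ A) (h2 : ∀ u < m, u ∈ A) : mex A = m := by
  refine le_antisymm (Nat.sInf_le h1) (le_csInf ⟨m, h1⟩ ?_)
  intro b hb
  by_contra hlt
  push_neg at hlt
  exact hb (h2 b hlt)

lemma step_length {w w' : List AB} (h : Step w w') : w'.length < w.length := by
  obtain ⟨x, y, rfl, hc⟩ := h
  rcases hc with hc | hc | hc <;> subst hc <;> simp <;> omega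

lemma sig_inj : Function.Injective sig := by decide

lemma grundy_eq {g : List AB → ℕ} (hg : IsGrundy Step g) : ∀ w : List AB, g w = t w := by
  have main : ∀ n, ∀ w : List AB, w.length < n → g w = t w := by
    intro n
    induction n with
    | zero => intro w h; omega
    | succ n ih =>
      intro w hw
      have hchild : ∀ w' ∈ {w' | Step w w'}, g w' = t w' := by
        intro w' hw'
        exact ih w' (by have := step_length hw'; omega)
      rw [hg w, Set.image_congr hchild]
      apply mex_spec
      · rintro ⟨w', hw', heq⟩
        exact step_ne hw' (sig_inj heq)
      · intro u hu
        obtain ⟨w', hstep, hval⟩ := reach u hu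
        exact ⟨w', hstep, hval⟩
  intro w
  exact main (w.length + 1) w (by omega)

end Stmt16

theorem stmt16 (g : List AB → ℕ) (hg : IsGrundy Step g) :
    ∀ w : List AB, g w ≤ 3 := by
  intro w
  rw [Stmt16.grundy_eq hg w]
  have : ∀ z : ZMod 4, Stmt16.sig z ≤ 3 := by decide
  exact this _
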